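/- (Mistake bound for PRIL, general case.) Let γ > 0, R² = max_{t∈[T]} ‖x^t‖² and c = min_{t∈[T]} (y_r^t − y_l^t). Then for any w ∈ ℝ^d and θ ∈ ℝ^{K−1} with ‖w‖² + ‖θ‖² = 1, setting d_i^t = max(0, γ − z_i^t(w·x^t − θ_i)) for i ∈ Ī^t and D² = Σ_{t=1}^T Σ_{i∈Ī^t} (d_i^t)², the PRIL iterates satisfy Σ_{t=1}^T L_I^{MAE}(w^t·x^t, θ^t, y_l^t, y_r^t) ≤ (D + √(R² + 1))²(K − c − 1)/γ². -/

import Mathlib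

open Finset

noncomputable def dotp {d : ℕ} (w x : Fin d → ℝ) : ℝ := ∑ i, w i * x i

noncomputable def zval (yl : ℕ) (i : ℕ) : ℝ := if i < yl then 1 else -1

def Ibar (K yl yr : ℕ) : Finset ℕ := Finset.Icc 1 (yl - 1) ∪ Finset.Icc yr (K - 1)

noncomputable def tau {d : ℕ} (K yl yr : ℕ) (x w : Fin d → ℝ) (θ : ℕ → ℝ) (i : ℕ) : ℝ :=
  if i ∈ Ibar K yl yr ∧ zval yl i * (dotp w x - θ i) ≤ 0 then zval yl i else 0

noncomputable def LMAE (K : ℕ) (f : ℝ) (θ : ℕ → ℝ) (yl yr : ℕ) : ℝ :=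
  (∑ i ∈ Finset.Icc 1 (yl - 1), if f < θ i then (1:ℝ) else 0) +
  (∑ i ∈ Finset.Icc yr (K - 1), if θ i ≤ f then (1:ℝ) else 0)

noncomputable def LIMC (K : ℕ) (f : ℝ) (yl yr : ℕ) (θ : ℕ → ℝ) : ℝ :=
  (∑ i ∈ Finset.Icc 1 (yl - 1), max 0 (θ i - f)) +
  (∑ i ∈ Finset.Icc yr (K - 1), max 0 (f - θ i))

noncomputable def mcount {d : ℕ} (K yl yr : ℕ) (x w : Fin d → ℝ) (θ : ℕ → ℝ) : ℕ :=
  ((Ibar K yl yr).filter (fun i => zval yl i * (dotp w x - θ i) ≤ 0)).card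

/-
PRIL is the perceptron run on the augmented vectors `(w, θ)`: trial `t` adds
`∑ᵢ τᵢ (x, -eᵢ)`, the sum over the misranked thresholds `i ∈ Ī` of `zᵢ (x, -eᵢ)`, and a
threshold is misranked exactly when `(w, θ)` has nonpositive margin `zᵢ (w·x - θᵢ)` on
`(x, -eᵢ)`. Hence the squared norm of the iterate grows by at most `m² R² + m` per trial, where
`m ≤ K - c - 1` is the number of misranked thresholds, while its correlation with a unit
`(w*, θ*)` grows by at least `γ m - ∑ dᵢ`. Comparing the two by Cauchy–Schwarz bounds the total
number of misranked thresholds, which dominates the interval insensitive loss.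
-/

open scoped RealInnerProductSpace

lemma eq_sum_of_succ_eq_add {M : Type*} [AddCommMonoid M] {u Δ : ℕ → M} {n : ℕ} (hu1 : u 1 = 0)
    (hu : ∀ t ∈ Icc 1 n, u (t + 1) = u t + Δ t) : u (n + 1) = ∑ t ∈ Icc 1 n, Δ t := by
  induction n with
  | zero => simpa using hu1
  | succ n ih =>
    rw [sum_Icc_succ_top (by omega), hu (n + 1) (by simp),
      ih fun t ht => hu t (Icc_subset_Icc_right n.le_succ ht)]

section Perceptron

variable {E : Type*} [NormedAddCommGroup E] [InnerProductSpace ℝ E] {u Δ : ℕ → E} {n : ℕ}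

lemma norm_sq_le_sum_norm_sq_of_inner_nonpos (hu1 : u 1 = 0)
    (hu : ∀ t ∈ Icc 1 n, u (t + 1) = u t + Δ t) (hΔ : ∀ t ∈ Icc 1 n, ⟪u t, Δ t⟫ ≤ 0) :
    ‖u (n + 1)‖ ^ 2 ≤ ∑ t ∈ Icc 1 n, ‖Δ t‖ ^ 2 := by
  induction n with
  | zero => simp [hu1]
  | succ n ih =>
    have hsub : Icc 1 n ⊆ Icc 1 (n + 1) := Icc_subset_Icc_right n.le_succ
    have hn : n + 1 ∈ Icc 1 (n + 1) := by simp
    have := ih (fun t ht => hu t (hsub ht)) (fun t ht => hΔ t (hsub ht))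
    rw [sum_Icc_succ_top (by omega), hu (n + 1) hn, norm_add_sq_real]
    linarith [hΔ (n + 1) hn]

lemma sum_inner_le_sqrt_sum_norm_sq {v : E} (hv : ‖v‖ ≤ 1) (hu1 : u 1 = 0)
    (hu : ∀ t ∈ Icc 1 n, u (t + 1) = u t + Δ t) (hΔ : ∀ t ∈ Icc 1 n, ⟪u t, Δ t⟫ ≤ 0) :
    ∑ t ∈ Icc 1 n, ⟪v, Δ t⟫ ≤ √(∑ t ∈ Icc 1 n, ‖Δ t‖ ^ 2) :=
  calc ∑ t ∈ Icc 1 n, ⟪v, Δ t⟫ = ⟪v, u (n + 1)⟫ := by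
        rw [eq_sum_of_succ_eq_add hu1 hu, inner_sum]
    _ ≤ ‖v‖ * ‖u (n + 1)‖ := real_inner_le_norm _ _
    _ ≤ ‖u (n + 1)‖ := mul_le_of_le_one_left (norm_nonneg _) hv
    _ ≤ √(∑ t ∈ Icc 1 n, ‖Δ t‖ ^ 2) :=
        Real.le_sqrt_of_sq_le (norm_sq_le_sum_norm_sq_of_inner_nonpos hu1 hu hΔ)

end Perceptron

lemma sum_sum_le_sqrt_sum_sum_sq_mul_sqrt_card {ι κ : Type*} (s : Finset ι) {S I : ι → Finset κ}
    (hS : ∀ t ∈ s, S t ⊆ I t) (f : ι → κ → ℝ) :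
    ∑ t ∈ s, ∑ i ∈ S t, f t i
      ≤ √(∑ t ∈ s, ∑ i ∈ I t, f t i ^ 2) * √(∑ t ∈ s, ((S t).card : ℝ)) := by
  have hcs : ∑ t ∈ s, ∑ i ∈ S t, f t i
      ≤ √(∑ t ∈ s, ∑ i ∈ S t, f t i ^ 2) * √(∑ t ∈ s, ((S t).card : ℝ)) := by
    simpa [sum_sigma] using
      Real.sum_mul_le_sqrt_mul_sqrt (s.sigma S) (fun p => f p.1 p.2) fun _ => 1
  refine hcs.trans (mul_le_mul_of_nonneg_right (Real.sqrt_le_sqrt ?_) (Real.sqrt_nonneg _))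
  exact sum_le_sum fun t ht =>
    sum_le_sum_of_subset_of_nonneg (hS t ht) fun i _ _ => sq_nonneg _

lemma le_div_sq_of_mul_le_sqrt_mul {γ A B M : ℝ} (hγ : 0 < γ) (hA : 0 ≤ A) (hM : 0 ≤ M)
    (h : γ * M ≤ √(A * M) * B) : M ≤ B ^ 2 * A / γ ^ 2 := by
  rcases hM.eq_or_lt with rfl | hM
  · positivity
  rw [le_div_iff₀ (by positivity)]
  have hsq : (γ * M) ^ 2 ≤ (√(A * M) * B) ^ 2 := pow_le_pow_left₀ (by positivity) h 2
  rw [mul_pow (√(A * M)), Real.sq_sqrt (by positivity)] at hsq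
  nlinarith

lemma natCast_le_mul_natCast_of_le {n : ℕ} {a : ℝ} (h : (n : ℝ) ≤ a) : (n : ℝ) ≤ a * n := by
  rcases n.eq_zero_or_pos with rfl | hn
  · simp
  have : (1 : ℝ) ≤ n := by exact_mod_cast hn
  nlinarith

lemma dotp_eq_dotProduct {d : ℕ} (w x : Fin d → ℝ) : dotp w x = w ⬝ᵥ x := rfl

section Augment

variable {d : ℕ} (K : ℕ)

/-- `(w, θ)` as one vector; only the thresholds `θ 1, …, θ (K - 1)` are coordinates. -/
noncomputable def augment (w : Fin d → ℝ) (θ : ℕ → ℝ) :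
    EuclideanSpace ℝ (Fin d ⊕ Icc 1 (K - 1)) :=
  WithLp.toLp 2 (Sum.elim w fun i => θ i)

noncomputable def augmentedUpdate (x : Fin d → ℝ) (τ : ℕ → ℝ) :
    EuclideanSpace ℝ (Fin d ⊕ Icc 1 (K - 1)) :=
  augment K ((∑ i ∈ Icc 1 (K - 1), τ i) • x) (-τ)

lemma inner_augment (a b : Fin d → ℝ) (α β : ℕ → ℝ) :
    ⟪augment K a α, augment K b β⟫ = dotp a b + ∑ i ∈ Icc 1 (K - 1), α i * β i := by
  simp [augment, PiLp.inner_apply, Fintype.sum_sum_type, dotp, mul_comm]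
  exact sum_attach _ fun i => α i * β i

lemma norm_augment_sq (a : Fin d → ℝ) (α : ℕ → ℝ) :
    ‖augment K a α‖ ^ 2 = ∑ i, a i ^ 2 + ∑ i ∈ Icc 1 (K - 1), α i ^ 2 := by
  rw [← real_inner_self_eq_norm_sq, inner_augment]
  simp [dotp, sq]

lemma augment_add_augmentedUpdate (w x : Fin d → ℝ) (θ τ : ℕ → ℝ) :
    augment K (w + (∑ i ∈ Icc 1 (K - 1), τ i) • x) (θ - τ)
      = augment K w θ + augmentedUpdate K x τ := by
  ext (i | i) <;> simp [augment, augmentedUpdate, sub_eq_add_neg]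

lemma inner_augment_augmentedUpdate (a x : Fin d → ℝ) (α τ : ℕ → ℝ) :
    ⟪augment K a α, augmentedUpdate K x τ⟫ = ∑ i ∈ Icc 1 (K - 1), τ i * (dotp a x - α i) := by
  simp only [augmentedUpdate, inner_augment, dotp_eq_dotProduct, dotProduct_smul, smul_eq_mul,
    sum_mul, ← sum_add_distrib, Pi.neg_apply]
  exact sum_congr rfl fun i _ => by ring

lemma norm_augmentedUpdate_sq (x : Fin d → ℝ) (τ : ℕ → ℝ) :
    ‖augmentedUpdate K x τ‖ ^ 2
      = (∑ i ∈ Icc 1 (K - 1), τ i) ^ 2 * ∑ i, x i ^ 2 + ∑ i ∈ Icc 1 (K - 1), τ i ^ 2 := by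
  simp [augmentedUpdate, norm_augment_sq, mul_pow, mul_sum]

end Augment

section PRIL

variable {d K yl yr : ℕ} {x w : Fin d → ℝ} {θ : ℕ → ℝ}

noncomputable def mistakes (K yl yr : ℕ) (x w : Fin d → ℝ) (θ : ℕ → ℝ) : Finset ℕ :=
  (Ibar K yl yr).filter fun i => zval yl i * (dotp w x - θ i) ≤ 0

lemma card_mistakes : (mistakes K yl yr x w θ).card = mcount K yl yr x w θ := rfl

lemma mistakes_subset_Ibar : mistakes K yl yr x w θ ⊆ Ibar K yl yr := filter_subset _ _

lemma tau_eq_ite (i : ℕ) :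
    tau K yl yr x w θ i = if i ∈ mistakes K yl yr x w θ then zval yl i else 0 := by
  simp [tau, mistakes]

lemma zval_sq (yl i : ℕ) : zval yl i ^ 2 = 1 := by
  unfold zval; split <;> norm_num

lemma Ibar_subset_Icc (hyl : yl ≤ K) (hyr : 1 ≤ yr) : Ibar K yl yr ⊆ Icc 1 (K - 1) :=
  union_subset (Icc_subset_Icc_right (by omega)) (Icc_subset_Icc_left hyr)

lemma mcount_le_sub_sub_one_of_le {c : ℕ} (h1 : 1 ≤ yl) (h2 : yl ≤ yr) (h3 : yr ≤ K)
    (hc : c ≤ yr - yl) : (mcount K yl yr x w θ : ℝ) ≤ K - c - 1 := by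
  have hIbar := card_union_le (Icc 1 (yl - 1)) (Icc yr (K - 1))
  rw [Nat.card_Icc, Nat.card_Icc] at hIbar
  have hm : mcount K yl yr x w θ ≤ (Ibar K yl yr).card := card_filter_le _ _
  have : ((mcount K yl yr x w θ + c + 1 : ℕ) : ℝ) ≤ K := by
    unfold Ibar at hm
    exact_mod_cast (by omega)
  push_cast at this
  linarith

lemma LMAE_le_mcount (h : yl ≤ yr) : LMAE K (dotp w x) θ yl yr ≤ mcount K yl yr x w θ := by
  have hdisj : Disjoint (Icc 1 (yl - 1)) (Icc yr (K - 1)) :=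
    disjoint_left.2 fun i hi hj => by simp only [mem_Icc] at hi hj; omega
  rw [mcount, card_filter, Ibar, sum_union hdisj, LMAE]
  push_cast
  refine add_le_add (sum_le_sum fun i hi => ?_) (sum_le_sum fun i hi => ?_)
  · have hz : zval yl i = 1 := if_pos (by simp only [mem_Icc] at hi; omega)
    rw [hz]
    split_ifs <;> linarith
  · have hz : zval yl i = -1 := if_neg (by simp only [mem_Icc] at hi; omega)
    rw [hz]
    split_ifs <;> linarith

lemma sum_ite_mem_mistakes (hI : Ibar K yl yr ⊆ Icc 1 (K - 1)) (f : ℕ → ℝ) :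
    ∑ i ∈ Icc 1 (K - 1), (if i ∈ mistakes K yl yr x w θ then f i else 0)
      = ∑ i ∈ mistakes K yl yr x w θ, f i := by
  rw [sum_ite_mem, inter_eq_right.2 (mistakes_subset_Ibar.trans hI)]

lemma inner_augment_augmentedUpdate_tau_nonpos :
    ⟪augment K w θ, augmentedUpdate K x (tau K yl yr x w θ)⟫ ≤ 0 := by
  rw [inner_augment_augmentedUpdate]
  refine sum_nonpos fun i _ => ?_
  rw [tau_eq_ite]
  split_ifs with hi
  · exact (mem_filter.1 hi).2
  · simp

lemma mul_mcount_sub_sum_hinge_le_inner (hI : Ibar K yl yr ⊆ Icc 1 (K - 1)) (γ : ℝ)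
    (wv : Fin d → ℝ) (θv : ℕ → ℝ) :
    γ * mcount K yl yr x w θ
        - ∑ i ∈ mistakes K yl yr x w θ, max 0 (γ - zval yl i * (dotp wv x - θv i))
      ≤ ⟪augment K wv θv, augmentedUpdate K x (tau K yl yr x w θ)⟫ := by
  simp_rw [inner_augment_augmentedUpdate, tau_eq_ite, ite_mul, zero_mul]
  rw [sum_ite_mem_mistakes hI, ← card_mistakes, mul_comm γ, ← nsmul_eq_mul, ← sum_const,
    ← sum_sub_distrib]
  exact sum_le_sum fun i _ => by linarith [le_max_right 0 (γ - zval yl i * (dotp wv x - θv i))]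

lemma norm_augmentedUpdate_tau_sq_le (hI : Ibar K yl yr ⊆ Icc 1 (K - 1)) {A R : ℝ}
    (hA : (mcount K yl yr x w θ : ℝ) ≤ A) (hR : ∑ i, x i ^ 2 ≤ R) :
    ‖augmentedUpdate K x (tau K yl yr x w θ)‖ ^ 2 ≤ A * (R + 1) * mcount K yl yr x w θ := by
  set m : ℝ := (mcount K yl yr x w θ : ℝ)
  have hsum : ∑ i ∈ Icc 1 (K - 1), tau K yl yr x w θ i
      = ∑ i ∈ mistakes K yl yr x w θ, zval yl i := by
    simp_rw [tau_eq_ite, sum_ite_mem_mistakes hI]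
  have hsq : ∑ i ∈ Icc 1 (K - 1), tau K yl yr x w θ i ^ 2 = m := by
    have htau_sq (i : ℕ) :
        tau K yl yr x w θ i ^ 2 = if i ∈ mistakes K yl yr x w θ then 1 else 0 := by
      rw [tau_eq_ite]
      split_ifs <;> simp [zval_sq]
    simp_rw [htau_sq]
    rw [sum_ite_mem_mistakes hI, sum_const, card_mistakes, nsmul_one]
  have hcs : (∑ i ∈ mistakes K yl yr x w θ, zval yl i) ^ 2 ≤ m ^ 2 := by
    have := sq_sum_le_card_mul_sum_sq (s := mistakes K yl yr x w θ) (f := zval yl)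
    rwa [sum_congr rfl fun i _ => zval_sq yl i, sum_const, card_mistakes, nsmul_one, ← sq] at this
  have hm0 : 0 ≤ m := Nat.cast_nonneg _
  have hx0 : 0 ≤ ∑ i, x i ^ 2 := by positivity
  rw [norm_augmentedUpdate_sq, hsum, hsq]
  nlinarith [natCast_le_mul_natCast_of_le hA, mul_le_mul hA hR hx0 (hm0.trans hA),
    mul_le_mul_of_nonneg_right hcs hx0]

end PRIL

lemma sum_inner_augmentedUpdate_tau_le_sqrt {d K T : ℕ} {x w : ℕ → Fin d → ℝ} {yl yr : ℕ → ℕ}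
    {θ : ℕ → ℕ → ℝ} (hw1 : w 1 = 0) (hθ1 : ∀ i, θ 1 i = 0)
    (hwrec : ∀ t ∈ Icc 1 T, w (t + 1)
      = w t + (∑ i ∈ Icc 1 (K - 1), tau K (yl t) (yr t) (x t) (w t) (θ t) i) • x t)
    (hθrec : ∀ t ∈ Icc 1 T, ∀ i, θ (t + 1) i = θ t i - tau K (yl t) (yr t) (x t) (w t) (θ t) i)
    {v : EuclideanSpace ℝ (Fin d ⊕ Icc 1 (K - 1))} (hv : ‖v‖ ≤ 1) :
    ∑ t ∈ Icc 1 T, ⟪v, augmentedUpdate K (x t) (tau K (yl t) (yr t) (x t) (w t) (θ t))⟫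
      ≤ √(∑ t ∈ Icc 1 T,
        ‖augmentedUpdate K (x t) (tau K (yl t) (yr t) (x t) (w t) (θ t))‖ ^ 2) := by
  refine sum_inner_le_sqrt_sum_norm_sq (u := fun t => augment K (w t) (θ t)) hv ?_ ?_
    fun t _ => inner_augment_augmentedUpdate_tau_nonpos
  · ext (i | i) <;> simp [augment, hw1, hθ1]
  · intro t ht
    rw [hwrec t ht, show θ (t + 1) = θ t - tau K (yl t) (yr t) (x t) (w t) (θ t) from
      funext (hθrec t ht)]
    exact augment_add_augmentedUpdate K _ _ _ _

lemma mul_sum_mcount_sub_le_sum_inner {d K : ℕ} (s : Finset ℕ) (x w : ℕ → Fin d → ℝ)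
    (θ : ℕ → ℕ → ℝ) {yl yr : ℕ → ℕ} (hI : ∀ t ∈ s, Ibar K (yl t) (yr t) ⊆ Icc 1 (K - 1))
    (γ : ℝ) (wv : Fin d → ℝ) (θv : ℕ → ℝ) :
    γ * ∑ t ∈ s, (mcount K (yl t) (yr t) (x t) (w t) (θ t) : ℝ)
        - √(∑ t ∈ s, ∑ i ∈ Ibar K (yl t) (yr t),
            max 0 (γ - zval (yl t) i * (dotp wv (x t) - θv i)) ^ 2)
          * √(∑ t ∈ s, (mcount K (yl t) (yr t) (x t) (w t) (θ t) : ℝ))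
      ≤ ∑ t ∈ s, ⟪augment K wv θv,
          augmentedUpdate K (x t) (tau K (yl t) (yr t) (x t) (w t) (θ t))⟫ := by
  refine le_trans ?_ (sum_le_sum fun t ht => mul_mcount_sub_sum_hinge_le_inner (hI t ht) γ wv θv)
  rw [sum_sub_distrib, ← mul_sum]
  exact sub_le_sub_left (sum_sum_le_sqrt_sum_sum_sq_mul_sqrt_card s
    (fun t _ => mistakes_subset_Ibar) fun t i => max 0 (γ - zval (yl t) i * (dotp wv (x t) - θv i)))
    _

theorem pril_mistake_bound_general_general
    {d K T : ℕ} (hT : 1 ≤ T)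
    (x : ℕ → Fin d → ℝ) (yl yr : ℕ → ℕ)
    (hy : ∀ t ∈ Finset.Icc 1 T, 1 ≤ yl t ∧ yl t ≤ yr t ∧ yr t ≤ K)
    (w : ℕ → Fin d → ℝ) (θ : ℕ → ℕ → ℝ)
    (hw1 : w 1 = 0) (hθ1 : ∀ i, θ 1 i = 0)
    (hwrec : ∀ t ∈ Finset.Icc 1 T,
      w (t+1) = w t + (∑ i ∈ Finset.Icc 1 (K-1),
        tau K (yl t) (yr t) (x t) (w t) (θ t) i) • x t)
    (hθrec : ∀ t ∈ Finset.Icc 1 T, ∀ i,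
      θ (t+1) i = θ t i - tau K (yl t) (yr t) (x t) (w t) (θ t) i)
    (R2 : ℝ)
    (hR2 : R2 = (Finset.Icc 1 T).sup' (Finset.nonempty_Icc.mpr hT)
      (fun t => ∑ i, (x t i) ^ 2))
    (c : ℕ)
    (hc : c = (Finset.Icc 1 T).inf' (Finset.nonempty_Icc.mpr hT)
      (fun t => yr t - yl t))
    (γ : ℝ) (hγ : 0 < γ)
    (wv : Fin d → ℝ) (θv : ℕ → ℝ)
    (hnorm : (∑ i, wv i ^ 2) + (∑ i ∈ Finset.Icc 1 (K-1), θv i ^ 2) = 1)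
    (D : ℝ) (hD : 0 ≤ D)
    (hD2 : D ^ 2 = ∑ t ∈ Finset.Icc 1 T, ∑ i ∈ Ibar K (yl t) (yr t),
      (max 0 (γ - zval (yl t) i * (dotp wv (x t) - θv i))) ^ 2) :
    ∑ t ∈ Finset.Icc 1 T, LMAE K (dotp (w t) (x t)) (θ t) (yl t) (yr t)
      ≤ (D + Real.sqrt (R2 + 1)) ^ 2 * ((K : ℝ) - (c : ℝ) - 1) / γ ^ 2 := by
  set M := ∑ t ∈ Icc 1 T, (mcount K (yl t) (yr t) (x t) (w t) (θ t) : ℝ)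
  set A : ℝ := K - c - 1
  set Δ := fun t => augmentedUpdate K (x t) (tau K (yl t) (yr t) (x t) (w t) (θ t))
  have hI (t) (ht : t ∈ Icc 1 T) : Ibar K (yl t) (yr t) ⊆ Icc 1 (K - 1) :=
    Ibar_subset_Icc ((hy t ht).2.1.trans (hy t ht).2.2) ((hy t ht).1.trans (hy t ht).2.1)
  have hmA (t) (ht : t ∈ Icc 1 T) : (mcount K (yl t) (yr t) (x t) (w t) (θ t) : ℝ) ≤ A :=
    mcount_le_sub_sub_one_of_le (hy t ht).1 (hy t ht).2.1 (hy t ht).2.2 (hc ▸ inf'_le _ ht)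
  have hA : 0 ≤ A := (Nat.cast_nonneg _).trans (hmA 1 (left_mem_Icc.2 hT))
  have hMA : M ≤ A * M := by
    rw [mul_sum]
    exact sum_le_sum fun t ht => natCast_le_mul_natCast_of_le (hmA t ht)
  have hperceptron := sum_inner_augmentedUpdate_tau_le_sqrt hw1 hθ1 hwrec hθrec
    (v := augment K wv θv) (by rw [← sq_le_one_iff₀ (norm_nonneg _), norm_augment_sq, hnorm])
  have hprogress := mul_sum_mcount_sub_le_sum_inner (Icc 1 T) x w θ hI γ wv θv
  rw [← hD2, Real.sqrt_sq hD] at hprogress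
  have henergy : ∑ t ∈ Icc 1 T, ‖Δ t‖ ^ 2 ≤ A * (R2 + 1) * M := by
    rw [mul_sum]
    exact sum_le_sum fun t ht => norm_augmentedUpdate_tau_sq_le (hI t ht) (hmA t ht)
      (hR2 ▸ le_sup' (fun t => ∑ i, x t i ^ 2) ht)
  have key : γ * M ≤ √(A * M) * (D + √(R2 + 1)) := by
    have hsplit : √(A * (R2 + 1) * M) = √(A * M) * √(R2 + 1) := by
      rw [mul_right_comm, Real.sqrt_mul (by positivity)]
    linarith [Real.sqrt_le_sqrt henergy, mul_le_mul_of_nonneg_left (Real.sqrt_le_sqrt hMA) hD]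
  calc ∑ t ∈ Icc 1 T, LMAE K (dotp (w t) (x t)) (θ t) (yl t) (yr t) ≤ M :=
        sum_le_sum fun t ht => LMAE_le_mcount (hy t ht).2.1
    _ ≤ _ := le_div_sq_of_mul_le_sqrt_mul hγ hA (sum_nonneg fun t _ => Nat.cast_nonneg _) key

/-- Mistake bound for PRIL, general case. -/
theorem pril_mistake_bound_general
    {d K T : ℕ} (hd : 1 ≤ d) (hK : 2 ≤ K) (hT : 1 ≤ T)
    (x : ℕ → Fin d → ℝ) (yl yr : ℕ → ℕ)
    (hy : ∀ t ∈ Finset.Icc 1 T, 1 ≤ yl t ∧ yl t ≤ yr t ∧ yr t ≤ K)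
    (w : ℕ → Fin d → ℝ) (θ : ℕ → ℕ → ℝ)
    (hw1 : w 1 = 0) (hθ1 : ∀ i, θ 1 i = 0)
    (hwrec : ∀ t ∈ Finset.Icc 1 T,
      w (t+1) = w t + (∑ i ∈ Finset.Icc 1 (K-1),
        tau K (yl t) (yr t) (x t) (w t) (θ t) i) • x t)
    (hθrec : ∀ t ∈ Finset.Icc 1 T, ∀ i,
      θ (t+1) i = θ t i - tau K (yl t) (yr t) (x t) (w t) (θ t) i)
    (R2 : ℝ)
    (hR2 : R2 = (Finset.Icc 1 T).sup' (Finset.nonempty_Icc.mpr hT)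
      (fun t => ∑ i, (x t i) ^ 2))
    (c : ℕ)
    (hc : c = (Finset.Icc 1 T).inf' (Finset.nonempty_Icc.mpr hT)
      (fun t => yr t - yl t))
    (γ : ℝ) (hγ : 0 < γ)
    (wv : Fin d → ℝ) (θv : ℕ → ℝ)
    (hnorm : (∑ i, wv i ^ 2) + (∑ i ∈ Finset.Icc 1 (K-1), θv i ^ 2) = 1)
    (D : ℝ) (hD : 0 ≤ D)
    (hD2 : D ^ 2 = ∑ t ∈ Finset.Icc 1 T, ∑ i ∈ Ibar K (yl t) (yr t),
      (max 0 (γ - zval (yl t) i * (dotp wv (x t) - θv i))) ^ 2) :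
    ∑ t ∈ Finset.Icc 1 T, LMAE K (dotp (w t) (x t)) (θ t) (yl t) (yr t)
      ≤ (D + Real.sqrt (R2 + 1)) ^ 2 * ((K : ℝ) - (c : ℝ) - 1) / γ ^ 2 :=
  pril_mistake_bound_general_general hT x yl yr hy w θ hw1 hθ1 hwrec hθrec R2 hR2 c hc γ hγ wv θv
    hnorm D hD hD2
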